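/- Let L and M be complete OMLs and let f : L → M be a surjective map preserving arbitrary suprema, arbitrary infima, and orthocomplementation. Then there exists a central element c of L such that M is isomorphic, as an ortholattice, to the interval [⊥, c] of L equipped with the induced order and the orthocomplementation z ↦ zᶜ ⊓ c. -/

import Mathlib

/-- A complete orthomodular lattice. -/
class CompleteOML (α : Type*) extends CompleteLattice α, Compl α where
  compl_compl : ∀ x : α, xᶜᶜ = x
  compl_antitone : ∀ x y : α, x ≤ y → yᶜ ≤ xᶜ
  inf_compl : ∀ x : α, x ⊓ xᶜ = ⊥
  sup_compl : ∀ x : α, x ⊔ xᶜ = ⊤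
  orthomodular : ∀ x y : α, x ≤ y → x ⊔ (xᶜ ⊓ y) = y

/-- `x` and `y` commute: `x = (x ⊓ y) ⊔ (x ⊓ yᶜ)`. -/
def Commutes {α : Type*} [Lattice α] [Compl α] (x y : α) : Prop :=
  x = (x ⊓ y) ⊔ (x ⊓ yᶜ)

/-!
Let `a` be the largest element of the kernel of `f` (the supremum of everything sent to `⊥`) and
`c := aᶜ`. Since `f c = ⊤`, the only element below `c` in the kernel is `⊥`. Orthomodularity turns
this into two facts: if `u ≤ c` and `f u ≤ f v`, the relative complement `(u ⊓ v)ᶜ ⊓ u` lies in the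
kernel below `c`, so `u ≤ v`; and `(c ⊓ y) ⊔ (c ⊓ yᶜ)` is sent to `⊤`, so its relative complement
in `c` vanishes and `c` is central. Hence `f` restricts to an order embedding of `[⊥, c]` into `M`,
surjective because `f (x ⊓ c) = f x`, and it carries `z ↦ zᶜ ⊓ c` to the complement of `M`.
-/

namespace CompleteOML

variable {α : Type*} [CompleteOML α]

theorem compl_bot : (⊥ : α)ᶜ = ⊤ := by
  simpa using sup_compl (⊥ : α)

theorem compl_top : (⊤ : α)ᶜ = ⊥ := by
  simpa using inf_compl (⊤ : α)

theorem compl_sup (x y : α) : (x ⊔ y)ᶜ = xᶜ ⊓ yᶜ := by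
  refine le_antisymm (le_inf (compl_antitone _ _ le_sup_left) (compl_antitone _ _ le_sup_right)) ?_
  have hsup : x ⊔ y ≤ (xᶜ ⊓ yᶜ)ᶜ := by
    refine sup_le ?_ ?_
    · simpa only [compl_compl] using compl_antitone _ _ (inf_le_left : xᶜ ⊓ yᶜ ≤ xᶜ)
    · simpa only [compl_compl] using compl_antitone _ _ (inf_le_right : xᶜ ⊓ yᶜ ≤ yᶜ)
  simpa only [compl_compl] using compl_antitone _ _ hsup

theorem inf_eq_compl_sup_compl (x y : α) : x ⊓ y = (xᶜ ⊔ yᶜ)ᶜ := by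
  rw [compl_sup, compl_compl, compl_compl]

theorem eq_of_le_of_compl_inf_eq_bot {x y : α} (hxy : x ≤ y) (h : xᶜ ⊓ y = ⊥) : x = y := by
  simpa [h] using orthomodular x y hxy

theorem eq_bot_of_le_of_le_compl {x y : α} (hx : x ≤ y) (hxc : x ≤ yᶜ) : x = ⊥ :=
  le_bot_iff.mp (inf_compl y ▸ le_inf hx hxc)

end CompleteOML

namespace sSupHom

open CompleteOML

variable {L M : Type*}

section CompleteLattice

variable [CompleteLattice L] [CompleteLattice M] (f : sSupHom L M)

def kerTop : L := sSup (f ⁻¹' {⊥})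

theorem map_kerTop : f f.kerTop = ⊥ := by
  rw [kerTop, map_sSup]
  exact le_bot_iff.mp (sSup_le (Set.forall_mem_image.2 fun _ hx => le_of_eq hx))

theorem le_kerTop {x : L} (hx : f x = ⊥) : x ≤ f.kerTop :=
  le_sSup hx

end CompleteLattice

variable [CompleteOML L] [CompleteOML M] {f : sSupHom L M}

theorem map_inf (hf : ∀ x, f xᶜ = (f x)ᶜ) (x y : L) : f (x ⊓ y) = f x ⊓ f y := by
  rw [inf_eq_compl_sup_compl, hf, map_sup, hf, hf, ← inf_eq_compl_sup_compl]

theorem map_compl_kerTop (hf : ∀ x, f xᶜ = (f x)ᶜ) : f f.kerTopᶜ = ⊤ := by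
  rw [hf, map_kerTop, CompleteOML.compl_bot]

theorem map_compl_inf_compl_kerTop (hf : ∀ x, f xᶜ = (f x)ᶜ) (x : L) :
    f (xᶜ ⊓ f.kerTopᶜ) = (f x)ᶜ := by
  rw [map_inf hf, map_compl_kerTop hf, inf_top_eq, hf]

theorem eq_bot_of_map_eq_bot_of_le_compl_kerTop {x : L} (hx : f x = ⊥)
    (hxc : x ≤ f.kerTopᶜ) : x = ⊥ :=
  eq_bot_of_le_of_le_compl (f.le_kerTop hx) hxc

theorem le_of_map_le_map_of_le_compl_kerTop (hf : ∀ x, f xᶜ = (f x)ᶜ) {u v : L}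
    (hu : u ≤ f.kerTopᶜ) (huv : f u ≤ f v) : u ≤ v := by
  have hker : f ((u ⊓ v)ᶜ ⊓ u) = ⊥ := by
    rw [map_inf hf, hf, map_inf hf, inf_eq_left.mpr huv, inf_comm, inf_compl]
  have hbot := eq_bot_of_map_eq_bot_of_le_compl_kerTop hker (inf_le_right.trans hu)
  exact inf_eq_left.mp (eq_of_le_of_compl_inf_eq_bot inf_le_left hbot)

theorem commutes_compl_kerTop (hf : ∀ x, f xᶜ = (f x)ᶜ) (y : L) : Commutes f.kerTopᶜ y := by
  set c := f.kerTopᶜ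
  have hd : (c ⊓ y) ⊔ (c ⊓ yᶜ) ≤ c := sup_le inf_le_left inf_le_left
  have hker : f (((c ⊓ y) ⊔ (c ⊓ yᶜ))ᶜ ⊓ c) = ⊥ := by
    rw [map_compl_inf_compl_kerTop hf, map_sup, map_inf hf, map_inf hf, map_compl_kerTop hf, hf,
      top_inf_eq, top_inf_eq, sup_compl, CompleteOML.compl_top]
  exact (eq_of_le_of_compl_inf_eq_bot hd
    (eq_bot_of_map_eq_bot_of_le_compl_kerTop hker inf_le_right)).symm

def iicEmbedding (hf : ∀ x, f xᶜ = (f x)ᶜ) : Set.Iic f.kerTopᶜ ↪o M :=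
  OrderEmbedding.ofMapLEIff (fun x => f x) fun x _ =>
    ⟨le_of_map_le_map_of_le_compl_kerTop hf x.2, fun h => OrderHomClass.mono f h⟩

@[simp]
theorem iicEmbedding_apply (hf : ∀ x, f xᶜ = (f x)ᶜ) (x : Set.Iic f.kerTopᶜ) :
    iicEmbedding hf x = f x :=
  rfl

theorem iicEmbedding_surjective (hf : ∀ x, f xᶜ = (f x)ᶜ) (hsurj : Function.Surjective f) :
    Function.Surjective (iicEmbedding hf) := by
  intro z
  obtain ⟨x, rfl⟩ := hsurj z
  exact ⟨⟨x ⊓ f.kerTopᶜ, inf_le_right⟩, by simp [map_inf hf, map_compl_kerTop hf]⟩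

end sSupHom

theorem surjective_complete_hom_image_iso_interval_general {L M : Type*} [CompleteOML L]
    [CompleteOML M] (f : L → M) (hsurj : Function.Surjective f)
    (hsSup : ∀ S : Set L, f (sSup S) = sSup (f '' S))
    (hcompl : ∀ x : L, f (xᶜ) = (f x)ᶜ) :
    ∃ c : L, (∀ y : L, Commutes c y) ∧
      ∃ g : M ≃o Set.Iic c, ∀ z : M, ((g (zᶜ) : L)) = ((g z : L))ᶜ ⊓ c := by
  let F : sSupHom L M := ⟨f, hsSup⟩
  let e := F.iicEmbedding hcompl
  let g := (OrderIso.ofSurjective e (F.iicEmbedding_surjective hcompl hsurj)).symm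
  have heg : ∀ z, e (g z) = z := (OrderIso.ofSurjective e _).apply_symm_apply
  refine ⟨F.kerTopᶜ, F.commutes_compl_kerTop hcompl, g, fun z => ?_⟩
  have hcompl_g : e (g zᶜ) = e ⟨(g z : L)ᶜ ⊓ F.kerTopᶜ, inf_le_right⟩ := by
    rw [heg, sSupHom.iicEmbedding_apply, sSupHom.map_compl_inf_compl_kerTop hcompl,
      ← sSupHom.iicEmbedding_apply hcompl, heg]
  exact congrArg Subtype.val (e.injective hcompl_g)

/-- if `f : L → M` is a surjective complete homomorphism of complete OMLs,
then there is a central element `c` of `L` such that `M` is isomorphic, as an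
ortholattice, to the interval `[⊥, c]` of `L` with the orthocomplementation
`z ↦ zᶜ ⊓ c`. -/
theorem surjective_complete_hom_image_iso_interval {L M : Type*} [CompleteOML L]
    [CompleteOML M] (f : L → M) (hsurj : Function.Surjective f)
    (hsSup : ∀ S : Set L, f (sSup S) = sSup (f '' S))
    (hsInf : ∀ S : Set L, f (sInf S) = sInf (f '' S))
    (hcompl : ∀ x : L, f (xᶜ) = (f x)ᶜ) :
    ∃ c : L, (∀ y : L, Commutes c y) ∧
      ∃ g : M ≃o Set.Iic c, ∀ z : M, ((g (zᶜ) : L)) = ((g z : L))ᶜ ⊓ c :=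
  surjective_complete_hom_image_iso_interval_general f hsurj hsSup hcompl
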